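/- arXiv:2508.11243 — 7 statements merged into one kernel-verified Lean document; each statement's English description precedes it below -/
import Mathlib

section
/- Let a ≥ 2 be a natural number, d = a² + 4a, and θ = (a + 2 + √d)/2. Let (q_n) be the convergent denominators of [0; 1,a,1,a,...] defined by q_0 = q_1 = 1, q_N = a·q_{N-1}+q_{N-2} for even N ≥ 2, q_N = q_{N-1}+q_{N-2} for odd N ≥ 2. Then for every ℓ ≥ 0, q_{2ℓ} = ((a+√d)/(2√d))·θ^ℓ − ((a−√d)/(2√d))·θ^{−ℓ}. -/
set_option maxHeartbeats 800000


theorem stmt_2 (a : ℕ) (ha : 2 ≤ a) (q : ℕ → ℕ)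
    (h0 : q 0 = 1) (h1 : q 1 = 1)
    (heven : ∀ N, 2 ≤ N → Even N → q N = a * q (N - 1) + q (N - 2))
    (hodd : ∀ N, 2 ≤ N → Odd N → q N = q (N - 1) + q (N - 2))
    (d θ : ℝ) (hd : d = (a : ℝ) ^ 2 + 4 * a)
    (hθ : θ = ((a : ℝ) + 2 + Real.sqrt d) / 2) :
    ∀ ℓ : ℕ, (q (2 * ℓ) : ℝ) =
      (((a : ℝ) + Real.sqrt d) / (2 * Real.sqrt d)) * θ ^ ℓ
      - (((a : ℝ) - Real.sqrt d) / (2 * Real.sqrt d)) * θ ^ (-(ℓ : ℤ)) := by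
  set s := Real.sqrt d with hs
  have ha' : (2 : ℝ) ≤ (a : ℝ) := by exact_mod_cast ha
  have hdpos : 0 < d := by nlinarith
  have hspos : 0 < s := Real.sqrt_pos.mpr hdpos
  have hs2 : s ^ 2 = d := Real.sq_sqrt hdpos.le
  have hθpos : 0 < θ := by rw [hθ]; positivity
  have key : θ * (((a : ℝ) + 2) - θ) = 1 := by rw [hθ]; nlinarith [hs2, hd]
  have hinv : θ⁻¹ = ((a : ℝ) + 2) - θ := inv_eq_of_mul_eq_one_right key
  set t : ℝ := θ⁻¹ with ht
  have key2 : t * (((a : ℝ) + 2) - t) = 1 := by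
    rw [hinv]; nlinarith [key]
  have hθ2 : θ ^ 2 = ((a : ℝ) + 2) * θ - 1 := by nlinarith [key]
  have ht2 : t ^ 2 = ((a : ℝ) + 2) * t - 1 := by nlinarith [key2]
  have hzp : ∀ ℓ : ℕ, θ ^ (-(ℓ : ℤ)) = t ^ ℓ := by
    intro ℓ
    rw [zpow_neg, zpow_natCast, ← inv_pow, ← ht]
  intro ℓ
  rw [hzp]
  induction ℓ using Nat.twoStepInduction with
  | zero =>
    simp [h0]
    field_simp
    ring
  | one =>
    have hq2 : q 2 = a * q 1 + q 0 := heven 2 le_rfl (by decide)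
    rw [show 2 * 1 = 2 from rfl, hq2, h0, h1]
    have hθv : θ = ((a : ℝ) + 2 + s) / 2 := hθ
    have htv : t = ((a : ℝ) + 2 - s) / 2 := by rw [hinv, hθv]; ring
    rw [hθv, htv]
    push_cast
    field_simp
    ring
  | more n ih0 ih1 =>
    have e2 : 2 * (n + 2) = 2 * n + 4 := by ring
    have hq4 : q (2 * n + 4) = a * q (2 * n + 3) + q (2 * n + 2) := by
      have := heven (2 * n + 4) (by omega) ⟨n + 2, by ring⟩
      simpa using this
    have hq3 : q (2 * n + 3) = q (2 * n + 2) + q (2 * n + 1) := by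
      have := hodd (2 * n + 3) (by omega) ⟨n + 1, by ring⟩
      simpa using this
    have hq2 : q (2 * n + 2) = a * q (2 * n + 1) + q (2 * n) := by
      have := heven (2 * n + 2) (by omega) ⟨n + 1, by ring⟩
      simpa using this
    have hrec : (q (2 * n + 4) : ℝ) =
        ((a : ℝ) + 2) * (q (2 * n + 2) : ℝ) - (q (2 * n) : ℝ) := by
      have h4 : (q (2 * n + 4) : ℝ) = (a : ℝ) * q (2 * n + 3) + q (2 * n + 2) := by
        exact_mod_cast congrArg (Nat.cast : ℕ → ℝ) hq4
      have h3 : (q (2 * n + 3) : ℝ) = (q (2 * n + 2) : ℝ) + q (2 * n + 1) := by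
        exact_mod_cast congrArg (Nat.cast : ℕ → ℝ) hq3
      have h2 : (q (2 * n + 2) : ℝ) = (a : ℝ) * q (2 * n + 1) + q (2 * n) := by
        exact_mod_cast congrArg (Nat.cast : ℕ → ℝ) hq2
      linear_combination h4 + (a:ℝ) * h3 - h2
    rw [e2, hrec]
    have e1 : 2 * (n + 1) = 2 * n + 2 := by ring
    rw [e1] at ih1
    have hsne : s ≠ 0 := ne_of_gt hspos
    have hθne : θ ≠ 0 := ne_of_gt hθpos
    linear_combination (norm := (field_simp; ring)) ((a : ℝ) + 2) * ih1 - ih0 -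
      (((a : ℝ) + s) / (2 * s)) * θ ^ n * hθ2 +
      (((a : ℝ) - s) / (2 * s)) * t ^ n * ht2
end

section
/- Let a ≥ 2 be a natural number, d = a² + 4a, θ = (a + 2 + √d)/2, and let (q_n) be the convergent denominators of [0; 1,a,1,a,...] (q_0 = q_1 = 1, q_N = a·q_{N-1}+q_{N-2} for even N ≥ 2, q_N = q_{N-1}+q_{N-2} for odd N ≥ 2). Then for every ℓ ≥ 0, q_{2ℓ+1} = (θ/√d)·θ^ℓ − (θ^{−1}/√d)·θ^{−ℓ}. -/
/-!
On odd indices the two-step recurrence collapses to the single recurrence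
`r (ℓ + 2) = (a + 2) r (ℓ + 1) - r ℓ`, whose characteristic roots are `θ` and `θ⁻¹`
(they satisfy `θ + θ⁻¹ = a + 2` and `θ - θ⁻¹ = √d`). The closed form is then Binet's formula,
with coefficients fixed by `q 1 = 1` and `q 3 = a + 2`.
-/

section Convergents

variable {a : ℕ} {q : ℕ → ℕ}

theorem q_three (h0 : q 0 = 1) (h1 : q 1 = 1)
    (heven : ∀ N, 2 ≤ N → Even N → q N = a * q (N - 1) + q (N - 2))
    (hodd : ∀ N, 2 ≤ N → Odd N → q N = q (N - 1) + q (N - 2)) :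
    q 3 = a + 2 := by
  have h2 : q 2 = a * q 1 + q 0 := heven 2 le_rfl even_two
  have h3 : q 3 = q 2 + q 1 := hodd 3 (by norm_num) (by decide)
  rw [h3, h2, h1, h0]
  ring

theorem q_odd_add_q_odd (heven : ∀ N, 2 ≤ N → Even N → q N = a * q (N - 1) + q (N - 2))
    (hodd : ∀ N, 2 ≤ N → Odd N → q N = q (N - 1) + q (N - 2)) (n : ℕ) :
    q (2 * n + 5) + q (2 * n + 1) = (a + 2) * q (2 * n + 3) := by
  have h3 : q (2 * n + 3) = q (2 * n + 2) + q (2 * n + 1) :=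
    hodd _ (by omega) ⟨n + 1, by ring⟩
  have h4 : q (2 * n + 4) = a * q (2 * n + 3) + q (2 * n + 2) :=
    heven _ (by omega) ⟨n + 2, by ring⟩
  have h5 : q (2 * n + 5) = q (2 * n + 4) + q (2 * n + 3) :=
    hodd _ (by omega) ⟨n + 2, by ring⟩
  rw [h5, h4, h3]
  ring

end Convergents

theorem eq_mul_pow_add_mul_pow_of_two_step {R : Type*} [CommRing R] {b c x y α β : R}
    {u : ℕ → R} (hu : ∀ n, u (n + 2) = b * u (n + 1) + c * u n)
    (hx : x ^ 2 = b * x + c) (hy : y ^ 2 = b * y + c)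
    (h0 : u 0 = α + β) (h1 : u 1 = α * x + β * y) (n : ℕ) :
    u n = α * x ^ n + β * y ^ n := by
  induction n using Nat.twoStepInduction with
  | zero => simpa using h0
  | one => simpa using h1
  | more n ih₀ ih₁ =>
    rw [hu, ih₀, ih₁]
    linear_combination -(α * x ^ n) * hx - (β * y ^ n) * hy

theorem inv_sq_eq_of_sq_eq {K : Type*} [Field K] {c x : K} (hx₀ : x ≠ 0)
    (hx : x ^ 2 = c * x - 1) : x⁻¹ ^ 2 = c * x⁻¹ - 1 := by
  field_simp
  linear_combination hx

theorem stmt_3 (a : ℕ) (ha : 2 ≤ a) (q : ℕ → ℕ)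
    (h0 : q 0 = 1) (h1 : q 1 = 1)
    (heven : ∀ N, 2 ≤ N → Even N → q N = a * q (N - 1) + q (N - 2))
    (hodd : ∀ N, 2 ≤ N → Odd N → q N = q (N - 1) + q (N - 2))
    (d θ : ℝ) (hd : d = (a : ℝ) ^ 2 + 4 * a)
    (hθ : θ = ((a : ℝ) + 2 + Real.sqrt d) / 2) :
    ∀ ℓ : ℕ, (q (2 * ℓ + 1) : ℝ) =
      (θ / Real.sqrt d) * θ ^ ℓ - (θ⁻¹ / Real.sqrt d) * θ ^ (-(ℓ : ℤ)) := by
  intro ℓ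
  have ha₀ : (0 : ℝ) < a := Nat.cast_pos.mpr (by omega)
  have hd₀ : 0 < d := by rw [hd]; positivity
  have hs₀ : Real.sqrt d ≠ 0 := (Real.sqrt_pos.mpr hd₀).ne'
  have hs : Real.sqrt d ^ 2 = (a : ℝ) ^ 2 + 4 * a := by rw [Real.sq_sqrt hd₀.le, hd]
  have hθ₀ : θ ≠ 0 := by rw [hθ]; positivity
  have hθ_sq : θ ^ 2 = (a + 2) * θ - 1 := by rw [hθ]; linear_combination hs / 4
  have hθ_add : θ + θ⁻¹ = a + 2 := by field_simp; linear_combination hθ_sq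
  have hθ_sub : θ - θ⁻¹ = Real.sqrt d := by linear_combination 2 * hθ - hθ_add
  have hq3 : (q 3 : ℝ) = a + 2 := by exact_mod_cast q_three h0 h1 heven hodd
  have hrec (n : ℕ) :
      (q (2 * (n + 2) + 1) : ℝ) = (a + 2) * q (2 * (n + 1) + 1) + -1 * q (2 * n + 1) := by
    have h : (q (2 * n + 5) : ℝ) + q (2 * n + 1) = (a + 2) * q (2 * n + 3) := by
      exact_mod_cast q_odd_add_q_odd heven hodd n
    rw [show 2 * (n + 2) + 1 = 2 * n + 5 by ring, show 2 * (n + 1) + 1 = 2 * n + 3 by ring]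
    linear_combination h
  rw [zpow_neg, zpow_natCast, ← inv_pow, sub_eq_add_neg, ← neg_mul]
  refine eq_mul_pow_add_mul_pow_of_two_step (u := fun ℓ ↦ (q (2 * ℓ + 1) : ℝ)) hrec
    (by linear_combination hθ_sq) (by linear_combination inv_sq_eq_of_sq_eq hθ₀ hθ_sq) ?_ ?_ ℓ
  · rw [← sub_eq_add_neg, ← sub_div, hθ_sub, div_self hs₀, h1, Nat.cast_one]
  · rw [show θ / √d * θ + -(θ⁻¹ / √d) * θ⁻¹ = (θ + θ⁻¹) * (θ - θ⁻¹) / √d by ring, hθ_add, hθ_sub,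
      mul_div_cancel_right₀ _ hs₀]
    exact hq3
end

section
/- Let a ≥ 2 be a natural number, d = a² + 4a, θ = (a + 2 + √d)/2, and let (q_n) be the convergent denominators of [0; 1,a,1,a,...]. Then for every ℓ ≥ 0, (7/8)·(θ/√d)·θ^ℓ < q_{2ℓ+1} < (9/8)·(θ/√d)·θ^ℓ. -/
set_option maxHeartbeats 1000000 in
theorem stmt_5 (a : ℕ) (ha : 2 ≤ a) (q : ℕ → ℕ)
    (h0 : q 0 = 1) (h1 : q 1 = 1)
    (heven : ∀ N, 2 ≤ N → Even N → q N = a * q (N - 1) + q (N - 2))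
    (hodd : ∀ N, 2 ≤ N → Odd N → q N = q (N - 1) + q (N - 2))
    (d θ : ℝ) (hd : d = (a : ℝ) ^ 2 + 4 * a)
    (hθ : θ = ((a : ℝ) + 2 + Real.sqrt d) / 2) :
    ∀ ℓ : ℕ, (7 / 8 : ℝ) * (θ / Real.sqrt d) * θ ^ ℓ < (q (2 * ℓ + 1) : ℝ) ∧
      (q (2 * ℓ + 1) : ℝ) < (9 / 8) * (θ / Real.sqrt d) * θ ^ ℓ := by
  have ha2 : (2:ℝ) ≤ (a:ℝ) := by exact_mod_cast ha
  have hd4 : (4:ℝ) < d := by nlinarith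
  have hdpos : (0:ℝ) < d := by linarith
  set s := Real.sqrt d with hs
  have hs2 : s ^ 2 = d := Real.sq_sqrt hdpos.le
  have hspos : 0 < s := Real.sqrt_pos.mpr hdpos
  have hs_gt2 : 2 < s := by nlinarith [hs2, hspos]
  set φ := ((a:ℝ) + 2 - s)/2 with hφ
  have hθφ : θ * φ = 1 := by
    rw [hθ, hφ]; field_simp; nlinarith [hs2]
  have hsum : θ + φ = (a:ℝ) + 2 := by rw [hθ, hφ]; ring
  have hθ3 : 3 < θ := by rw [hθ]; linarith
  have hφpos : 0 < φ := by nlinarith [hθφ]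
  have hdiff : θ - φ = s := by rw [hθ, hφ]; ring
  have hθsq : θ ^ 2 = ((a:ℝ) + 2) * θ - 1 := by nlinarith [hθφ, hsum]
  have hφsq : φ ^ 2 = ((a:ℝ) + 2) * φ - 1 := by nlinarith [hθφ, hsum]
  -- explicit formula
  have key : ∀ n : ℕ, (q (2*n+1) : ℝ) = (θ^(n+1) - φ^(n+1)) / s ∧
      (q (2*(n+1)+1) : ℝ) = (θ^(n+2) - φ^(n+2)) / s := by
    intro n
    induction n with
    | zero =>
      have e2 : q 2 = a * q 1 + q 0 := heven 2 (by norm_num) (by decide)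
      have e3 : q 3 = q 2 + q 1 := hodd 3 (by norm_num) ⟨1, by norm_num⟩
      have hq3 : q 3 = a + 2 := by rw [e3, e2, h0, h1]; ring
      constructor
      · simp only [Nat.mul_zero, Nat.zero_add, h1, Nat.cast_one]
        rw [eq_div_iff hspos.ne']
        linarith [hdiff]
      · show (q 3 : ℝ) = (θ^2 - φ^2) / s
        rw [hq3, eq_div_iff hspos.ne']
        push_cast
        calc ((a:ℝ) + 2) * s = (θ + φ) * (θ - φ) := by rw [hsum, hdiff]
          _ = (θ^2 - φ^2) := by ring
    | succ n ih =>
      obtain ⟨ih1, ih2⟩ := ih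
      refine ⟨ih2, ?_⟩
      -- recurrence: q (2n+5) + q (2n+1) = (a+2) * q (2n+3)
      have e1 : q (2*n+4) = a * q (2*n+3) + q (2*n+2) := by
        have := heven (2*n+4) (by omega) ⟨n+2, by ring⟩
        simpa using this
      have e2 : q (2*n+5) = q (2*n+4) + q (2*n+3) := by
        have := hodd (2*n+5) (by omega) ⟨n+2, by ring⟩
        simpa using this
      have e3 : q (2*n+3) = q (2*n+2) + q (2*n+1) := by
        have := hodd (2*n+3) (by omega) ⟨n+1, by ring⟩
        simpa using this
      have erec : q (2*n+5) + q (2*n+1) = (a + 2) * q (2*n+3) := by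
        rw [e2, e1, e3]; ring
      have erecR : (q (2*n+5) : ℝ) = ((a:ℝ) + 2) * (q (2*n+3) : ℝ) - (q (2*n+1) : ℝ) := by
        have := congrArg (fun x : ℕ => (x : ℝ)) erec
        push_cast at this
        linarith
      have hidx1 : 2*(n+1)+1 = 2*n+3 := by ring
      have hidx2 : 2*(n+1+1)+1 = 2*n+5 := by ring
      rw [hidx2]
      rw [hidx1] at ih2
      rw [erecR, ih2, ih1]
      have hθp : θ^(n+3) = ((a:ℝ)+2) * θ^(n+2) - θ^(n+1) := by
        have : θ^(n+3) = θ^(n+1) * θ^2 := by ring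
        rw [this, hθsq]; ring
      have hφp : φ^(n+3) = ((a:ℝ)+2) * φ^(n+2) - φ^(n+1) := by
        have : φ^(n+3) = φ^(n+1) * φ^2 := by ring
        rw [this, hφsq]; ring
      show _ = (θ^(n+3) - φ^(n+3)) / s
      rw [hθp, hφp]
      field_simp
      ring
  intro ℓ
  have hf : (q (2*ℓ+1) : ℝ) = (θ^(ℓ+1) - φ^(ℓ+1)) / s := (key ℓ).1
  have hprod : φ^(ℓ+1) * θ^(ℓ+1) = 1 := by
    rw [← mul_pow, mul_comm φ θ, hθφ, one_pow]
  have hT : 3 < θ^(ℓ+1) := lt_of_lt_of_le hθ3 (le_self_pow₀ (by linarith) (by omega))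
  have hF : 0 < φ^(ℓ+1) := pow_pos hφpos _
  have h8 : 8 * φ^(ℓ+1) < θ^(ℓ+1) := by
    have hTpos : (0:ℝ) < θ^(ℓ+1) := by positivity
    have h2 : 8 * φ^(ℓ+1) * θ^(ℓ+1) < θ^(ℓ+1) * θ^(ℓ+1) := by
      rw [mul_assoc, hprod]; nlinarith [hT]
    exact lt_of_mul_lt_mul_right h2 hTpos.le
  have heq1 : (7 / 8 : ℝ) * (θ / s) * θ ^ ℓ = (7/8 * θ^(ℓ+1)) / s := by
    rw [pow_succ]; ring
  have heq2 : (9 / 8 : ℝ) * (θ / s) * θ ^ ℓ = (9/8 * θ^(ℓ+1)) / s := by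
    rw [pow_succ]; ring
  rw [hf, heq1, heq2]
  constructor <;> · rw [div_lt_div_iff_of_pos_right hspos]; linarith [h8, hF]
end

section
/- Let a ≥ 2 be a natural number, d = a² + 4a, θ = (a + 2 + √d)/2, and let (q_n) be the convergent denominators of [0; 1,a,1,a,...]. Then for every N ≥ 0, (1/2)·θ^{⌊N/2⌋} < q_N < (9/8)·(θ/√d)·θ^{⌊N/2⌋}. -/
set_option maxHeartbeats 1000000 in
theorem stmt_6 (a : ℕ) (ha : 2 ≤ a) (q : ℕ → ℕ)
    (h0 : q 0 = 1) (h1 : q 1 = 1)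
    (heven : ∀ N, 2 ≤ N → Even N → q N = a * q (N - 1) + q (N - 2))
    (hodd : ∀ N, 2 ≤ N → Odd N → q N = q (N - 1) + q (N - 2))
    (d θ : ℝ) (hd : d = (a : ℝ) ^ 2 + 4 * a)
    (hθ : θ = ((a : ℝ) + 2 + Real.sqrt d) / 2) :
    ∀ N : ℕ, (1 / 2 : ℝ) * θ ^ (N / 2) < (q N : ℝ) ∧
      (q N : ℝ) < (9 / 8) * (θ / Real.sqrt d) * θ ^ (N / 2) := by
  have ha' : (2:ℝ) ≤ (a:ℝ) := by exact_mod_cast ha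
  set s : ℝ := Real.sqrt d with hs
  have hd0 : (0:ℝ) ≤ d := by nlinarith
  have hs2 : s ^ 2 = (a:ℝ) ^ 2 + 4 * a := by
    rw [hs, Real.sq_sqrt hd0, hd]
  have hspos : 0 < s := by
    rw [hs]; apply Real.sqrt_pos.2; nlinarith
  have hsa : (a:ℝ) < s := by nlinarith
  have hsa2 : s < (a:ℝ) + 2 := by nlinarith
  set t : ℝ := ((a:ℝ) + 2 - s) / 2 with htdef
  have ht0 : 0 < t := by rw [htdef]; linarith
  have ht1 : t < 1 := by rw [htdef]; linarith
  have hθ1 : 1 < θ := by rw [hθ]; linarith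
  have hst : θ - t = s := by rw [hθ, htdef]; ring
  have hθt : θ + t = (a:ℝ) + 2 := by rw [hθ, htdef]; ring
  have hθ2 : θ ^ 2 = ((a:ℝ) + 2) * θ - 1 := by
    rw [hθ]; nlinarith
  have ht2 : t ^ 2 = ((a:ℝ) + 2) * t - 1 := by
    rw [htdef]; nlinarith
  have key : ∀ k : ℕ, (q (2*k) : ℝ) * s = θ^(k+1) - t^(k+1) - θ^k + t^k ∧
      (q (2*k+1) : ℝ) * s = θ^(k+1) - t^(k+1) := by
    intro k
    induction k with
    | zero =>
      constructor
      · simp only [Nat.mul_zero, h0]; push_cast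
        simp only [pow_one, pow_zero]; linarith
      · simp only [Nat.mul_zero, Nat.zero_add, h1]; push_cast
        simp only [pow_one, pow_zero]; linarith
    | succ k ih =>
      obtain ⟨hx, hy⟩ := ih
      have he : q (2*k+2) = a * q (2*k+1) + q (2*k) := by
        have h := heven (2*k+2) (by omega) ⟨k+1, by ring⟩
        have e1 : 2*k+2-1 = 2*k+1 := by omega
        have e2 : 2*k+2-2 = 2*k := by omega
        rwa [e1, e2] at h
      have ho : q (2*k+3) = q (2*k+2) + q (2*k+1) := by
        have h := hodd (2*k+3) (by omega) ⟨k+1, by ring⟩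
        have e1 : 2*k+3-1 = 2*k+2 := by omega
        have e2 : 2*k+3-2 = 2*k+1 := by omega
        rwa [e1, e2] at h
      have hX : (q (2*(k+1)) : ℝ) * s = θ^(k+2) - t^(k+2) - θ^(k+1) + t^(k+1) := by
        have e : 2*(k+1) = 2*k+2 := by ring
        rw [e, he]; push_cast
        linear_combination (a:ℝ) * hy + hx - θ^k * hθ2 + t^k * ht2
      refine ⟨hX, ?_⟩
      have e : 2*(k+1)+1 = 2*k+3 := by ring
      rw [e, ho]; push_cast
      have e2 : ((2:ℕ)*(k+1) : ℕ) = 2*k+2 := by ring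
      rw [e2] at hX
      push_cast at hX
      linear_combination hX + hy
  intro N
  have hθk : ∀ m : ℕ, 1 ≤ θ ^ m := fun m => one_le_pow₀ (le_of_lt hθ1)
  rcases Nat.even_or_odd N with ⟨k, hk⟩ | ⟨k, hk⟩
  · -- N = 2k
    have hkN : N = 2*k := by omega
    subst hkN
    have hN2 : 2*k/2 = k := by omega
    rw [hN2]
    obtain ⟨hx, -⟩ := key k
    have h1k : (1:ℝ) ≤ θ ^ k := hθk k
    have h1k1 : (1:ℝ) ≤ θ ^ (k+1) := hθk (k+1)
    have htk0 : 0 < t ^ k := pow_pos ht0 k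
    have htk1 : t ^ k ≤ 1 := pow_le_one₀ (le_of_lt ht0) (le_of_lt ht1)
    have htk10 : 0 < t ^ (k+1) := pow_pos ht0 (k+1)
    have htk11 : t ^ (k+1) ≤ 1 := pow_le_one₀ (le_of_lt ht0) (le_of_lt ht1)
    have hps : θ ^ (k+1) = θ ^ k * θ := pow_succ θ k
    have hts : t ^ (k+1) = t ^ k * t := pow_succ t k
    have hθknn : (0:ℝ) ≤ θ ^ k := by linarith
    have hexp : 2 * θ ^ (k+1) - 2 * θ ^ k - s * θ ^ k = (a:ℝ) * θ ^ k := by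
      rw [hps]
      have h2θ : 2 * θ = (a:ℝ) + 2 + s := by linarith [hst, hθt]
      linear_combination θ ^ k * h2θ
    have htkp : 0 < t ^ k - t ^ (k+1) := by
      rw [hts]
      nlinarith [mul_pos htk0 (by linarith : (0:ℝ) < 1 - t)]
    have hann : (0:ℝ) ≤ (a:ℝ) * θ ^ k := mul_nonneg (by linarith) hθknn
    constructor
    · -- lower
      have hQs : θ ^ k * s < (2 * (q (2*k) : ℝ)) * s := by nlinarith [hx, hexp, htkp, hann]
      have := lt_of_mul_lt_mul_right hQs (le_of_lt hspos)
      linarith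
    · -- upper
      rw [show (9/8 : ℝ) * (θ/s) * θ^k = (9/8 * θ * θ^k)/s by ring,
        lt_div_iff₀ hspos]
      nlinarith [hx, hps, hts, htk1, htk10, h1k, pow_pos (lt_trans one_pos hθ1) (k+1)]
  · -- N = 2k+1
    have hkN : N = 2*k+1 := by omega
    subst hkN
    have hN2 : (2*k+1)/2 = k := by omega
    rw [hN2]
    obtain ⟨-, hy⟩ := key k
    have h1k : (1:ℝ) ≤ θ ^ k := hθk k
    have htk10 : 0 < t ^ (k+1) := pow_pos ht0 (k+1)
    have htk11 : t ^ (k+1) ≤ 1 := pow_le_one₀ (le_of_lt ht0) (le_of_lt ht1)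
    have hps : θ ^ (k+1) = θ ^ k * θ := pow_succ θ k
    have hprod : (a:ℝ) + 2 ≤ θ ^ k * ((a:ℝ)+2) := by
      nlinarith [mul_le_mul_of_nonneg_right h1k (by linarith : (0:ℝ) ≤ (a:ℝ)+2)]
    have hexp : 2 * θ ^ (k+1) = θ ^ k * ((a:ℝ)+2) + θ ^ k * s := by
      rw [hps]
      have h2θ : 2 * θ = (a:ℝ) + 2 + s := by linarith [hst, hθt]
      linear_combination θ ^ k * h2θ
    constructor
    · -- lower
      have hQs : θ ^ k * s < (2 * (q (2*k+1) : ℝ)) * s := by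
        nlinarith [hy, hexp, hprod, htk11, ha']
      have := lt_of_mul_lt_mul_right hQs (le_of_lt hspos)
      linarith
    · rw [show (9/8 : ℝ) * (θ/s) * θ^k = (9/8 * θ * θ^k)/s by ring,
        lt_div_iff₀ hspos]
      nlinarith [hy, hps, htk10, pow_pos (lt_trans one_pos hθ1) (k+1)]
end

section
/- The real numbers θ_α = 2 + √3 and θ_β = (5 + √21)/2 are multiplicatively independent: if m, n are integers with θ_α^m · θ_β^n = 1, then m = n = 0. -/
lemma notsq21 : ¬ IsSquare (21:ℕ) := by
  rintro ⟨r, hr⟩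
  have h5 : r < 5 := by nlinarith
  interval_cases r <;> omega

lemma notsq7 : ¬ IsSquare (7:ℕ) := by
  rintro ⟨r, hr⟩
  have h3 : r < 3 := by nlinarith
  interval_cases r <;> omega

lemma irr21 : Irrational (Real.sqrt 21) := by
  have := irrational_sqrt_natCast_iff.mpr notsq21
  simpa using this

lemma irr7 : Irrational (Real.sqrt 7) := by
  have := irrational_sqrt_natCast_iff.mpr notsq7
  simpa using this

lemma sq3 : Real.sqrt 3 ^ 2 = 3 := Real.sq_sqrt (by norm_num)
lemma sq21 : Real.sqrt 21 ^ 2 = 21 := Real.sq_sqrt (by norm_num)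

lemma apow (k : ℕ) : ∃ p q : ℚ, 0 < p ∧ 0 < q ∧
    ((2:ℝ) + Real.sqrt 3) ^ (k+1) = p + q * Real.sqrt 3 := by
  induction k with
  | zero => exact ⟨2, 1, by norm_num, by norm_num, by norm_num⟩
  | succ k ih =>
    obtain ⟨p, q, hp, hq, h⟩ := ih
    refine ⟨2*p + 3*q, p + 2*q, by positivity, by positivity, ?_⟩
    rw [pow_succ, h]
    push_cast
    linear_combination (q:ℝ) * sq3

lemma bpow (k : ℕ) : ∃ p q : ℚ, 0 < p ∧ 0 < q ∧
    (((5:ℝ) + Real.sqrt 21) / 2) ^ (k+1) = p + q * Real.sqrt 21 := by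
  induction k with
  | zero => exact ⟨5/2, 1/2, by norm_num, by norm_num, by push_cast; ring⟩
  | succ k ih =>
    obtain ⟨p, q, hp, hq, h⟩ := ih
    refine ⟨(5*p + 21*q)/2, (p + 5*q)/2, by positivity, by positivity, ?_⟩
    rw [pow_succ, h]
    push_cast
    linear_combination ((q:ℝ)/2) * sq21

lemma key (j k : ℕ) :
    ((2:ℝ) + Real.sqrt 3) ^ (j+1) ≠ (((5:ℝ) + Real.sqrt 21) / 2) ^ (k+1) := by
  intro h
  obtain ⟨p, q, hp, hq, ha⟩ := apow j
  obtain ⟨r, s, hr, hs, hb⟩ := bpow k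
  rw [ha, hb] at h
  set u : ℚ := (r - p) / q with hu_def
  set v : ℚ := s / q with hv_def
  have hq0 : (q:ℝ) ≠ 0 := by exact_mod_cast hq.ne'
  have hv_pos : 0 < v := div_pos hs hq
  have hv0 : ((v:ℚ):ℝ) ≠ 0 := by exact_mod_cast hv_pos.ne'
  have h3 : Real.sqrt 3 = (u:ℝ) + (v:ℝ) * Real.sqrt 21 := by
    rw [hu_def, hv_def]
    push_cast
    field_simp
    linarith
  have hsq : (3:ℝ) = (u:ℝ)^2 + 21 * (v:ℝ)^2 + 2 * u * v * Real.sqrt 21 := by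
    have h3sq : (3:ℝ) = ((u:ℝ) + (v:ℝ) * Real.sqrt 21)^2 := by rw [← h3, sq3]
    linear_combination h3sq + ((v:ℝ))^2 * sq21
  by_cases hu : u = 0
  · rw [hu] at hsq
    push_cast at hsq
    simp at hsq
    -- hsq : 3 = 21 * v^2 (roughly)
    have hv7 : ((1/v : ℚ) : ℝ)^2 = 7 := by
      push_cast
      field_simp
      nlinarith [hsq]
    have hvpos : (0:ℝ) ≤ ((1/v : ℚ) : ℝ) := by
      have : (0:ℚ) ≤ 1/v := by positivity
      exact_mod_cast this
    have h7 : Real.sqrt 7 = ((1/v : ℚ) : ℝ) := by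
      rw [show (7:ℝ) = ((1/v : ℚ) : ℝ)^2 from hv7.symm]
      exact Real.sqrt_sq hvpos
    exact irr7 ⟨1/v, h7.symm⟩
  · have hu0 : ((u:ℚ):ℝ) ≠ 0 := by exact_mod_cast hu
    have hden : ((2*u*v : ℚ) : ℝ) ≠ 0 := by
      push_cast
      positivity
    have h21 : Real.sqrt 21 = (((3 - u^2 - 21*v^2) / (2*u*v) : ℚ) : ℝ) := by
      push_cast
      rw [eq_div_iff (by push_cast at hden; exact hden)]
      linear_combination -hsq
    exact irr21 ⟨_, h21.symm⟩

theorem stmt_7 (m n : ℤ)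
    (h : (2 + Real.sqrt 3) ^ m * ((5 + Real.sqrt 21) / 2) ^ n = 1) :
    m = 0 ∧ n = 0 := by
  set a : ℝ := 2 + Real.sqrt 3 with ha_def
  set b : ℝ := (5 + Real.sqrt 21) / 2 with hb_def
  have h3pos : (1:ℝ) < Real.sqrt 3 := by
    have : Real.sqrt 1 < Real.sqrt 3 := Real.sqrt_lt_sqrt (by norm_num) (by norm_num)
    simpa using this
  have h21pos : (3:ℝ) < Real.sqrt 21 := by
    have : Real.sqrt 9 < Real.sqrt 21 := Real.sqrt_lt_sqrt (by norm_num) (by norm_num)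
    rwa [show (9:ℝ) = 3^2 by norm_num, Real.sqrt_sq (by norm_num)] at this
  have ha1 : (1:ℝ) < a := by rw [ha_def]; linarith
  have hb1 : (1:ℝ) < b := by rw [hb_def]; linarith
  have ha0 : (0:ℝ) < a := by linarith
  have hb0 : (0:ℝ) < b := by linarith
  have hla : 0 < Real.log a := Real.log_pos ha1
  have hlb : 0 < Real.log b := Real.log_pos hb1
  have hlog : (m:ℝ) * Real.log a + (n:ℝ) * Real.log b = 0 := by
    have := congrArg Real.log h
    rw [Real.log_mul (by positivity) (by positivity), Real.log_zpow, Real.log_zpow,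
      Real.log_one] at this
    linarith
  have key' : ∀ j k : ℤ, 0 < j → 0 < k → a ^ j ≠ b ^ k := by
    intro j k hj hk heq
    lift j to ℕ using hj.le
    lift k to ℕ using hk.le
    rw [zpow_natCast, zpow_natCast] at heq
    obtain ⟨j', rfl⟩ : ∃ j', j = j' + 1 := ⟨j - 1, by omega⟩
    obtain ⟨k', rfl⟩ : ∃ k', k = k' + 1 := ⟨k - 1, by omega⟩
    exact key j' k' heq
  rcases eq_or_ne m 0 with hm | hm
  · subst hm
    refine ⟨rfl, ?_⟩
    have h2 : (n:ℝ) * Real.log b = 0 := by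
      push_cast at hlog
      linarith
    rcases mul_eq_zero.mp h2 with h1 | h1
    · exact_mod_cast h1
    · linarith
  · exfalso
    rcases lt_or_gt_of_ne hm with hm' | hm'
    · -- m < 0, so n > 0
      have hmr : (m:ℝ) < 0 := by exact_mod_cast hm'
      have hnlb : 0 < (n:ℝ) * Real.log b := by nlinarith
      have hn : 0 < n := by
        by_contra hc
        push_neg at hc
        have : (n:ℝ) ≤ 0 := by exact_mod_cast hc
        nlinarith
      have heq : a ^ (-m) = b ^ n := by
        rw [zpow_neg]
        rw [mul_comm] at h
        exact (eq_inv_of_mul_eq_one_left h).symm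
      exact key' (-m) n (by omega) hn heq
    · have hmr : (0:ℝ) < (m:ℝ) := by exact_mod_cast hm'
      have hnlb : (n:ℝ) * Real.log b < 0 := by nlinarith
      have hn : n < 0 := by
        by_contra hc
        push_neg at hc
        have : (0:ℝ) ≤ (n:ℝ) := by exact_mod_cast hc
        nlinarith
      have heq : a ^ m = b ^ (-n) := by
        rw [zpow_neg]
        exact eq_inv_of_mul_eq_one_left h
      exact key' m (-n) hm' (by omega) heq
end

section
/- Let α and β be real quadratic irrationals such that ℚ(α) ≠ ℚ(β), and let θ_α = (t_α + √(t_α² − 4(−1)^{s_α}))/2 and θ_β = (t_β + √(t_β² − 4(−1)^{s_β}))/2 be the dominant roots of the characteristic polynomials of the recurrences of their convergent denominators, where t_α, t_β ≥ 1 are positive integers and s_α, s_β ≥ 1 the period lengths, with ℚ(θ_α) = ℚ(α) and ℚ(θ_β) = ℚ(β). Then θ_α and θ_β are multiplicatively independent. -/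
open Polynomial IntermediateField


lemma quad_integral (t s : ℕ) (θ : ℝ) (h : θ ^ 2 - (t : ℝ) * θ + (-1 : ℝ) ^ s = 0) :
    IsIntegral ℤ θ := by
  refine ⟨X ^ 2 - C (t : ℤ) * X + C ((-1) ^ s), ?_, ?_⟩
  · have h1 : ((X ^ 2 - C (t : ℤ) * X + C ((-1) ^ s))).natDegree = 2 := by
      compute_degree!
    apply Polynomial.monic_of_natDegree_le_of_coeff_eq_one 2 (le_of_eq h1)
    rcases Nat.even_or_odd s with hs | hs <;>
      simp [coeff_X, coeff_C, coeff_one, hs.neg_one_pow]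
  · simp only [eval₂_eq_eval_map, Polynomial.map_add, Polynomial.map_sub, Polynomial.map_pow,
      Polynomial.map_mul, map_C, map_X, eval_add, eval_sub, eval_pow, eval_mul, eval_C, eval_X]
    push_cast
    linarith [h]

lemma quad_key (t s : ℕ) (θ : ℝ) (h : θ ^ 2 - (t : ℝ) * θ + (-1 : ℝ) ^ s = 0) :
    θ * ((-1 : ℝ) ^ s * ((t : ℝ) - θ)) = 1 := by
  have hs : (-1 : ℝ) ^ s * (-1 : ℝ) ^ s = 1 := by
    rw [← pow_add]; exact Even.neg_one_pow ⟨s, rfl⟩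
  linear_combination (-(-1 : ℝ) ^ s) * h + hs



lemma quad_inv_integral' (t s : ℕ) (θ : ℝ) (hθ : IsIntegral ℤ θ)
    (hinv : θ⁻¹ = (-1 : ℝ) ^ s * ((t : ℝ) - θ)) : IsIntegral ℤ θ⁻¹ := by
  have ht : IsIntegral ℤ ((t : ℝ)) := by
    have := isIntegral_algebraMap (R := ℤ) (A := ℝ) (x := (t : ℤ))
    rwa [algebraMap_int_eq, eq_intCast, Int.cast_natCast] at this
  have hsub : IsIntegral ℤ ((t : ℝ) - θ) := ht.sub hθ
  rw [hinv]
  rcases Nat.even_or_odd s with hs | hs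
  · rw [hs.neg_one_pow, one_mul]; exact hsub
  · rw [hs.neg_one_pow]; simpa using hsub.neg

-- irrationality of zpow
lemma irr_zpow {θ : ℝ} (h1 : 1 < θ) (hθ : IsIntegral ℤ θ) (hinv : IsIntegral ℤ θ⁻¹)
    {m : ℤ} (hm : m ≠ 0) : Irrational (θ ^ m) := by
  -- reduce to natural powers
  have key : ∀ k : ℕ, 0 < k → Irrational (θ ^ k) := by
    intro k hk
    rw [Irrational]
    intro ⟨q, hq⟩
    have hq1 : (1 : ℝ) < q := hq ▸ one_lt_pow₀ h1 (by omega)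
    have hint : IsIntegral ℤ ((q⁻¹ : ℚ) : ℝ) := by
      have : ((q⁻¹ : ℚ) : ℝ) = (θ⁻¹) ^ k := by
        push_cast; rw [hq, ← inv_pow]
      rw [this]; exact hinv.pow k
    have hint' : IsIntegral ℤ (q⁻¹ : ℚ) := by
      have := IsIntegral.tower_bot (A := ℚ) (B := ℝ) (R := ℤ)
        (algebraMap ℚ ℝ).injective (x := q⁻¹) ?_
      · exact this
      · rwa [show (algebraMap ℚ ℝ) q⁻¹ = ((q⁻¹ : ℚ) : ℝ) from eq_ratCast _ _]
    obtain ⟨z, hz⟩ := IsIntegrallyClosed.isIntegral_iff.mp hint'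
    rw [algebraMap_int_eq, eq_intCast] at hz
    have hq1' : (1 : ℚ) < q := by exact_mod_cast hq1
    have h0 : (0 : ℚ) < q⁻¹ := by positivity
    have hlt : q⁻¹ < 1 := by rw [inv_lt_one_iff₀]; right; exact hq1'
    rw [← hz] at h0 hlt
    have : (0 : ℤ) < z := by exact_mod_cast h0
    have : z < 1 := by exact_mod_cast hlt
    omega
  rcases lt_or_gt_of_ne hm with hneg | hpos
  · have : θ ^ m = ((θ ^ m.natAbs : ℝ))⁻¹ := by
      rw [← zpow_natCast, ← zpow_neg]; congr 1; omega
    rw [this]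
    exact (key m.natAbs (by omega)).inv
  · have : θ ^ m = θ ^ m.natAbs := by rw [← zpow_natCast]; congr 1; omega
    rw [this]; exact key m.natAbs (by omega)

lemma quad_inv_integral (t s : ℕ) (θ : ℝ) (h : θ ^ 2 - (t : ℝ) * θ + (-1 : ℝ) ^ s = 0) :
    IsIntegral ℤ θ⁻¹ :=
  quad_inv_integral' t s θ (quad_integral t s θ h)
    (inv_eq_of_mul_eq_one_right (quad_key t s θ h))


lemma quad_minpoly_deg (t s : ℕ) (θ : ℝ) (h : θ ^ 2 - (t : ℝ) * θ + (-1 : ℝ) ^ s = 0)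
    (hirr : Irrational θ) : (minpoly ℚ θ).natDegree = 2 := by
  have hq : aeval θ ((X ^ 2 - C (t : ℚ) * X + C ((-1) ^ s)) : ℚ[X]) = 0 := by
    simp only [map_add, map_sub, map_pow, map_mul, aeval_C, aeval_X]
    push_cast
    linarith [h]
  have hdvd := minpoly.dvd ℚ θ hq
  have hP2 : ((X ^ 2 - C (t : ℚ) * X + C ((-1) ^ s)) : ℚ[X]).natDegree = 2 := by
    compute_degree!
  have hmon : ((X ^ 2 - C (t : ℚ) * X + C ((-1) ^ s)) : ℚ[X]).Monic := by
    apply Polynomial.monic_of_natDegree_le_of_coeff_eq_one 2 (le_of_eq hP2)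
    rcases Nat.even_or_odd s with hs | hs <;>
      simp [coeff_X, coeff_C, coeff_one, hs.neg_one_pow]
  have hPne : ((X ^ 2 - C (t : ℚ) * X + C ((-1) ^ s)) : ℚ[X]) ≠ 0 := hmon.ne_zero
  have hle : (minpoly ℚ θ).natDegree ≤ 2 := hP2 ▸ Polynomial.natDegree_le_of_dvd hdvd hPne
  have hint : IsIntegral ℚ θ := ⟨_, hmon, hq⟩
  have hpos : 0 < (minpoly ℚ θ).natDegree := minpoly.natDegree_pos hint
  have hne1 : (minpoly ℚ θ).natDegree ≠ 1 := by
    intro h1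
    have hdeg1 : (minpoly ℚ θ).degree = 1 := by
      rw [Polynomial.degree_eq_natDegree (minpoly.ne_zero hint), h1]; rfl
    obtain ⟨q, hqq⟩ := (RingHom.mem_range).mp (minpoly.degree_eq_one_iff.mp hdeg1)
    exact hirr ⟨q, by rw [← hqq, eq_ratCast]⟩
  omega

-- irrational integral element of a degree-2 adjoin generates it
lemma adjoin_eq_of_irrational {θ γ : ℝ} (hθint : IsIntegral ℚ θ)
    (hdeg : (minpoly ℚ θ).natDegree = 2) (hγint : IsIntegral ℚ γ)
    (hγ : γ ∈ IntermediateField.adjoin ℚ ({θ} : Set ℝ)) (hγirr : Irrational γ) :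
    IntermediateField.adjoin ℚ ({γ} : Set ℝ) = IntermediateField.adjoin ℚ ({θ} : Set ℝ) := by
  have hfd : FiniteDimensional ℚ (IntermediateField.adjoin ℚ ({θ} : Set ℝ)) :=
    IntermediateField.adjoin.finiteDimensional hθint
  have hle : IntermediateField.adjoin ℚ ({γ} : Set ℝ) ≤ IntermediateField.adjoin ℚ ({θ} : Set ℝ) := by
    rw [IntermediateField.adjoin_le_iff]; simpa using hγ
  apply IntermediateField.eq_of_le_of_finrank_le hle
  rw [show (IntermediateField.adjoin ℚ ({θ} : Set ℝ)) = ℚ⟮θ⟯ from rfl,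
      show (IntermediateField.adjoin ℚ ({γ} : Set ℝ)) = ℚ⟮γ⟯ from rfl,
      IntermediateField.adjoin.finrank hθint, IntermediateField.adjoin.finrank hγint, hdeg]
  -- need 2 ≤ natDegree minpoly γ
  have hpos : 0 < (minpoly ℚ γ).natDegree := minpoly.natDegree_pos hγint
  have hne1 : (minpoly ℚ γ).natDegree ≠ 1 := by
    intro h1
    have hdeg1 : (minpoly ℚ γ).degree = 1 := by
      rw [Polynomial.degree_eq_natDegree (minpoly.ne_zero hγint), h1]; rfl
    obtain ⟨q, hqq⟩ := (RingHom.mem_range).mp (minpoly.degree_eq_one_iff.mp hdeg1)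
    exact hγirr ⟨q, by rw [← hqq, eq_ratCast]⟩
  omega

lemma zpow_int_integral {θ : ℝ} (hθ : IsIntegral ℚ θ) (hinv : IsIntegral ℚ θ⁻¹) (m : ℤ) :
    IsIntegral ℚ (θ ^ m) := by
  rcases le_or_gt 0 m with hm | hm
  · have : θ ^ m = θ ^ m.natAbs := by rw [← zpow_natCast]; congr 1; omega
    rw [this]; exact hθ.pow _
  · have : θ ^ m = (θ⁻¹) ^ m.natAbs := by
      rw [← zpow_natCast, inv_zpow, ← zpow_neg]; congr 1; omega
    rw [this]; exact hinv.pow _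

theorem stmt_8 (tα tβ : ℕ) (htα : 1 ≤ tα) (htβ : 1 ≤ tβ)
    (sα sβ : ℕ) (hsα : 1 ≤ sα) (hsβ : 1 ≤ sβ)
    (θα θβ : ℝ)
    (hθα : θα ^ 2 - (tα : ℝ) * θα + (-1 : ℝ) ^ sα = 0)
    (hθβ : θβ ^ 2 - (tβ : ℝ) * θβ + (-1 : ℝ) ^ sβ = 0)
    (hθα1 : 1 < θα) (hθβ1 : 1 < θβ)
    (hirrα : Irrational θα) (hirrβ : Irrational θβ)
    (hfields : IntermediateField.adjoin ℚ ({θα} : Set ℝ) ≠ IntermediateField.adjoin ℚ ({θβ} : Set ℝ)) :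
    ∀ m n : ℤ, θα ^ m * θβ ^ n = 1 → m = 0 ∧ n = 0 := by
  intro m n h
  have hαint := quad_integral tα sα θα hθα
  have hβint := quad_integral tβ sβ θβ hθβ
  have hαinv := quad_inv_integral tα sα θα hθα
  have hβinv := quad_inv_integral tβ sβ θβ hθβ
  by_cases hm : m = 0
  · subst hm
    simp only [zpow_zero, one_mul] at h
    have : n = 0 := by
      have := zpow_right_injective₀ (show (0:ℝ) < θβ by linarith) (by linarith)
        (show θβ ^ n = θβ ^ (0 : ℤ) by simpa using h)
      exact this
    exact ⟨rfl, this⟩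
  by_cases hn : n = 0
  · subst hn
    simp only [zpow_zero, mul_one] at h
    exact absurd (zpow_right_injective₀ (show (0:ℝ) < θα by linarith) (by linarith)
      (show θα ^ m = θα ^ (0 : ℤ) by simpa using h)) hm
  -- both nonzero
  exfalso
  set γ : ℝ := θα ^ m with hγdef
  have hγeq : γ = θβ ^ (-n) := by
    rw [hγdef, zpow_neg]
    exact eq_inv_of_mul_eq_one_left (mul_comm (θα ^ m) (θβ ^ n) ▸ h)
  have hγirr : Irrational γ := irr_zpow hθα1 hαint hαinv hm
  have hγKα : γ ∈ IntermediateField.adjoin ℚ ({θα} : Set ℝ) :=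
    (IntermediateField.adjoin ℚ ({θα} : Set ℝ)).toSubfield.zpow_mem
      (IntermediateField.mem_adjoin_simple_self ℚ θα) m
  have hγKβ : γ ∈ IntermediateField.adjoin ℚ ({θβ} : Set ℝ) := by
    rw [hγeq]
    exact (IntermediateField.adjoin ℚ ({θβ} : Set ℝ)).toSubfield.zpow_mem
      (IntermediateField.mem_adjoin_simple_self ℚ θβ) (-n)
  have hαQ : IsIntegral ℚ θα := hαint.tower_top
  have hβQ : IsIntegral ℚ θβ := hβint.tower_top
  have hαQi : IsIntegral ℚ θα⁻¹ := hαinv.tower_top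
  have hγint : IsIntegral ℚ γ := zpow_int_integral hαQ hαQi m
  have h1 := adjoin_eq_of_irrational hαQ (quad_minpoly_deg tα sα θα hθα hirrα) hγint hγKα hγirr
  have h2 := adjoin_eq_of_irrational hβQ (quad_minpoly_deg tβ sβ θβ hθβ hirrβ) hγint hγKβ hγirr
  exact hfields (h1 ▸ h2)
end

section
/- Let a ≥ 0, c ≥ 1, and g > (e²/c)^c be real numbers, and let x be a real number with x ≥ e and x = a + g·(log x)^c. Then x < 2^c·(a^{1/c} + g^{1/c}·log(c^c·g))^c. -/
private lemma seven_lt_exp_two : (7:ℝ) < Real.exp 2 := by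
  have h := Real.exp_one_gt_d9
  have : Real.exp 2 = Real.exp 1 * Real.exp 1 := by
    rw [← Real.exp_add]; norm_num
  nlinarith

private lemma two_log_lt {u : ℝ} (hu : Real.exp 2 ≤ u) : 2 * Real.log u < u := by
  have he0 : (0:ℝ) < Real.exp 2 := Real.exp_pos 2
  have hu0 : (0:ℝ) < u := lt_of_lt_of_le he0 hu
  have h1 : Real.log (u / Real.exp 2) ≤ u / Real.exp 2 - 1 :=
    Real.log_le_sub_one_of_pos (div_pos hu0 he0)
  rw [Real.log_div (ne_of_gt hu0) (Real.exp_ne_zero 2), Real.log_exp] at h1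
  have he : (7:ℝ) < Real.exp 2 := seven_lt_exp_two
  have h2 : u / Real.exp 2 ≤ u / 7 := by
    apply div_le_div_of_nonneg_left (le_of_lt hu0) (by norm_num) (le_of_lt he)
  have h3 : Real.log u ≤ u / 7 + 1 := by linarith
  nlinarith

/-- The `c = 1` case of the Pethő–de Weger lemma. -/
private lemma deweger_one {y A b : ℝ} (hy0 : 0 < y) (hA : 0 ≤ A)
    (hb : Real.exp 2 < b) (hyb : y ≤ A + b * Real.log y) :
    y < 2 * (A + b * Real.log b) := by
  have hb0 : 0 < b := lt_trans (Real.exp_pos 2) hb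
  have hlogb : 2 < Real.log b := by
    have := Real.log_lt_log (Real.exp_pos 2) hb
    rwa [Real.log_exp] at this
  set x₀ := 2 * (A + b * Real.log b) with hx₀def
  have hbx₀ : b < x₀ := by nlinarith
  have hx₀0 : 0 < x₀ := lt_trans hb0 hbx₀
  set t := 2 * (b * Real.log b) with htdef
  have ht0 : 0 < t := by nlinarith
  -- log x₀ ≤ log t + 2A/t
  have hlog1 : Real.log x₀ ≤ Real.log t + 2 * A / t := by
    have h1 : Real.log (x₀ / t) ≤ x₀ / t - 1 :=
      Real.log_le_sub_one_of_pos (div_pos hx₀0 ht0)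
    rw [Real.log_div (ne_of_gt hx₀0) (ne_of_gt ht0)] at h1
    have h2 : x₀ / t - 1 = 2 * A / t := by
      rw [hx₀def, htdef]; field_simp; ring
    linarith [h1, h2.le, h2.ge]
  -- b * log t < 2 b log b
  have hlog2 : b * Real.log t < 2 * (b * Real.log b) := by
    have h1 : t < b ^ 2 := by
      have := two_log_lt (le_of_lt hb)
      rw [htdef]; nlinarith
    have h2 : Real.log t < 2 * Real.log b := by
      have := Real.log_lt_log ht0 h1
      rwa [Real.log_pow] at this
      -- log (b^2) with natural power
    nlinarith
  have hlog3 : b * (2 * A / t) ≤ A := by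
    have hne : Real.log b ≠ 0 := by linarith
    have heqq : b * (2 * A / t) = A / Real.log b := by
      rw [htdef]; field_simp
    rw [heqq]
    exact div_le_self hA (by linarith)
  have hkey : A < x₀ - b * Real.log x₀ := by
    have : b * Real.log x₀ ≤ b * Real.log t + b * (2 * A / t) := by nlinarith
    have hx₀val : x₀ = 2 * A + t := by rw [hx₀def, htdef]; ring
    nlinarith
  by_contra hcon
  push_neg at hcon  -- x₀ ≤ y
  have hmono : x₀ - b * Real.log x₀ ≤ y - b * Real.log y := by
    have h1 : Real.log (y / x₀) ≤ y / x₀ - 1 :=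
      Real.log_le_sub_one_of_pos (div_pos hy0 hx₀0)
    rw [Real.log_div (ne_of_gt hy0) (ne_of_gt hx₀0)] at h1
    have h2 : y / x₀ - 1 = (y - x₀) / x₀ := by field_simp
    have h3 : Real.log y - Real.log x₀ ≤ (y - x₀) / x₀ := by linarith
    have h4 : b * (Real.log y - Real.log x₀) ≤ b * ((y - x₀) / x₀) :=
      mul_le_mul_of_nonneg_left h3 (le_of_lt hb0)
    have h5 : b * ((y - x₀) / x₀) ≤ y - x₀ := by
      rw [mul_div_assoc', div_le_iff₀ hx₀0]
      nlinarith
    nlinarith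
  linarith

theorem stmt_9 (a c g x : ℝ) (ha : 0 ≤ a) (hc : 1 ≤ c)
    (hg : (Real.exp 2 / c) ^ c < g)
    (hx : Real.exp 1 ≤ x)
    (heq : x = a + g * (Real.log x) ^ c) :
    x < (2 : ℝ) ^ c * (a ^ (1 / c) + g ^ (1 / c) * Real.log (c ^ c * g)) ^ c := by
  have hc0 : (0:ℝ) < c := lt_of_lt_of_le one_pos hc
  have hec : 0 < Real.exp 2 / c := div_pos (Real.exp_pos 2) hc0
  have hg0 : 0 < g := lt_trans (Real.rpow_pos_of_pos hec c) hg
  have hx0 : 0 < x := lt_of_lt_of_le (Real.exp_pos 1) hx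
  set L := Real.log x with hLdef
  have hL1 : 1 ≤ L := by
    have := Real.log_le_log (Real.exp_pos 1) hx
    rwa [Real.log_exp] at this
  have hL0 : 0 < L := lt_of_lt_of_le one_pos hL1
  have hgc : Real.exp 2 / c < g ^ (1/c) := by
    have h := Real.rpow_lt_rpow (le_of_lt (Real.rpow_pos_of_pos hec c)) hg
      (by positivity : (0:ℝ) < 1/c)
    rw [one_div] at h
    rwa [Real.rpow_rpow_inv (le_of_lt hec) (ne_of_gt hc0), ← one_div] at h
  have hg1c0 : 0 < g ^ (1/c) := lt_trans hec hgc
  set u := c * g ^ (1/c) with hudef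
  have hu : Real.exp 2 < u := by
    have h := (mul_lt_mul_iff_right₀ hc0).mpr hgc
    rw [mul_div_cancel₀ _ (ne_of_gt hc0)] at h
    exact h
  have hu0 : 0 < u := lt_trans (Real.exp_pos 2) hu
  -- log (c^c * g) = c * log u
  have hch : Real.log (c ^ c * g) = c * Real.log u := by
    rw [hudef, Real.log_mul (ne_of_gt (Real.rpow_pos_of_pos hc0 c)) (ne_of_gt hg0),
      Real.log_mul (ne_of_gt hc0) (ne_of_gt hg1c0), Real.log_rpow hc0, Real.log_rpow hg0]
    field_simp
  -- y = x^(1/c)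
  set y := x ^ (1/c) with hydef
  have hy0 : 0 < y := Real.rpow_pos_of_pos hx0 _
  have hlogy : Real.log y = (1/c) * L := by
    rw [hydef, Real.log_rpow hx0]
  -- subadditivity: y ≤ a^(1/c) + g^(1/c) * L
  have hsub : y ≤ a ^ (1/c) + g ^ (1/c) * L := by
    have h1 : (a + g * L ^ c) ^ (1/c) ≤ a ^ (1/c) + (g * L ^ c) ^ (1/c) := by
      have hGL : (0:ℝ) ≤ g * L ^ c := by positivity
      have hp0 : (0:ℝ) ≤ 1/c := by positivity
      have hp1 : 1/c ≤ (1:ℝ) := by rw [div_le_one hc0]; exact hc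
      have h := NNReal.rpow_add_le_add_rpow a.toNNReal (g * L ^ c).toNNReal hp0 hp1
      have h' := (NNReal.coe_le_coe).mpr h
      push_cast [NNReal.coe_rpow, Real.coe_toNNReal a ha,
        Real.coe_toNNReal (g * L ^ c) hGL] at h'
      exact h'
    have h2 : (g * L ^ c) ^ (1/c) = g ^ (1/c) * L := by
      rw [Real.mul_rpow (le_of_lt hg0) (by positivity), one_div,
        Real.rpow_rpow_inv (le_of_lt hL0) (ne_of_gt hc0), ← one_div]
    rw [hydef, heq]
    calc (a + g * L ^ c) ^ (1/c) ≤ a ^ (1/c) + (g * L ^ c) ^ (1/c) := h1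
    _ = a ^ (1/c) + g ^ (1/c) * L := by rw [h2]
  have hyb : y ≤ a ^ (1/c) + u * Real.log y := by
    have : u * Real.log y = g ^ (1/c) * L := by
      rw [hlogy, hudef]; field_simp
    rw [this]; exact hsub
  have hmain : y < 2 * (a ^ (1/c) + u * Real.log u) :=
    deweger_one hy0 (Real.rpow_nonneg ha _) hu hyb
  -- rewrite u * log u = g^(1/c) * log (c^c*g)
  have hrw : u * Real.log u = g ^ (1/c) * Real.log (c ^ c * g) := by
    rw [hch, hudef]; ring
  rw [hrw] at hmain
  -- conclude by raising to the power c
  have hs0 : 0 ≤ a ^ (1/c) + g ^ (1/c) * Real.log (c ^ c * g) := by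
    have := hmain; nlinarith [hy0]
  have hxy : y ^ c = x := by
    rw [hydef, one_div, Real.rpow_inv_rpow (le_of_lt hx0) (ne_of_gt hc0)]
  have hfin := Real.rpow_lt_rpow (le_of_lt hy0) hmain hc0
  rw [hxy, Real.mul_rpow (by norm_num : (0:ℝ) ≤ 2) hs0] at hfin
  exact hfin
end
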